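/- arXiv:1708.05280 — 5 statements merged into one kernel-verified Lean document; each statement's English description precedes it below -/
import Mathlib

section
/- Let c : [0,L] → ℝ³ be twice differentiable with ‖c'(s)‖ = 1 for all s, and let v : [0,L] → ℝ³ be a differentiable solution of the frame ODE v'(s) = -(c''(s)·v(s)) c'(s) with ‖v(0)‖ = 1 and v(0)·c'(0) = 0. Then for every s ∈ [0,L], the triple {c'(s), v(s), c'(s) × v(s)} is an orthonormal set in ℝ³: ‖v(s)‖ = 1, v(s)·c'(s) = 0, ‖c'(s) × v(s)‖ = 1, (c'(s) × v(s))·c'(s) = 0 and (c'(s) × v(s))·v(s) = 0. -/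
/-!
Differentiating `⟪v, c'⟫` along the frame ODE gives `⟪c'', v⟫ (1 - ‖c'‖²)`, which vanishes because
`c` is parameterized by arc length; so `v` stays orthogonal to `c'`. Then `(‖v‖²)' = -2 ⟪c'', v⟫ ⟪c', v⟫`
vanishes too, so `v` stays a unit vector. The cross product of two orthonormal vectors is a unit
vector orthogonal to both (Lagrange's identity).
-/

open scoped RealInnerProductSpace

open Set

/-- The cross product on `ℝ³`. -/
noncomputable def cross3 (a b : EuclideanSpace ℝ (Fin 3)) : EuclideanSpace ℝ (Fin 3) :=
  WithLp.toLp 2 ![a 1 * b 2 - a 2 * b 1, a 2 * b 0 - a 0 * b 2, a 0 * b 1 - a 1 * b 0]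

section CrossProduct

variable (a b : EuclideanSpace ℝ (Fin 3))

lemma inner_cross3_left : ⟪cross3 a b, a⟫ = 0 := by
  simp only [cross3, PiLp.inner_apply, RCLike.inner_apply, Real.ringHom_apply, Fin.sum_univ_three,
    Matrix.cons_val_zero, Matrix.cons_val_one, Matrix.cons_val]
  ring

lemma inner_cross3_right : ⟪cross3 a b, b⟫ = 0 := by
  simp only [cross3, PiLp.inner_apply, RCLike.inner_apply, Real.ringHom_apply, Fin.sum_univ_three,
    Matrix.cons_val_zero, Matrix.cons_val_one, Matrix.cons_val]
  ring

lemma norm_cross3_sq : ‖cross3 a b‖ ^ 2 = ‖a‖ ^ 2 * ‖b‖ ^ 2 - ⟪a, b⟫ ^ 2 := by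
  simp only [← real_inner_self_eq_norm_sq]
  simp only [cross3, PiLp.inner_apply, RCLike.inner_apply, Real.ringHom_apply, Fin.sum_univ_three,
    Matrix.cons_val_zero, Matrix.cons_val_one, Matrix.cons_val]
  ring

variable {a b}

lemma norm_cross3_of_orthonormal (ha : ‖a‖ = 1) (hb : ‖b‖ = 1) (hab : ⟪a, b⟫ = 0) :
    ‖cross3 a b‖ = 1 := by
  have h : ‖cross3 a b‖ ^ 2 = 1 ^ 2 := by rw [norm_cross3_sq, ha, hb, hab]; norm_num
  exact (sq_eq_sq₀ (norm_nonneg _) zero_le_one).mp h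

end CrossProduct

lemma eq_of_hasDerivAt_zero_on_Icc {E : Type*} [NormedAddCommGroup E] [NormedSpace ℝ E]
    {f : ℝ → E} {a b : ℝ} (hf : ∀ s ∈ Icc a b, HasDerivAt f 0 s) :
    ∀ s ∈ Icc a b, f s = f a :=
  constant_of_has_deriv_right_zero (fun s hs => (hf s hs).continuousAt.continuousWithinAt)
    fun s hs => (hf s (Ico_subset_Icc_self hs)).hasDerivWithinAt

section FrameODE

variable {E : Type*} [NormedAddCommGroup E] [InnerProductSpace ℝ E]
  {a b : ℝ} {c' c'' v : ℝ → E}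

lemma frameODE_inner_tangent_eq (hc' : ∀ s ∈ Icc a b, HasDerivAt c' (c'' s) s)
    (hunit : ∀ s ∈ Icc a b, ‖c' s‖ = 1)
    (hv : ∀ s ∈ Icc a b, HasDerivAt v (-⟪c'' s, v s⟫ • c' s) s) :
    ∀ s ∈ Icc a b, ⟪v s, c' s⟫ = ⟪v a, c' a⟫ := by
  refine eq_of_hasDerivAt_zero_on_Icc fun s hs => ?_
  refine ((hv s hs).inner ℝ (hc' s hs)).congr_deriv ?_
  rw [real_inner_smul_left, real_inner_self_eq_norm_sq, hunit s hs, real_inner_comm (v s)]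
  ring

lemma frameODE_norm_eq (hv : ∀ s ∈ Icc a b, HasDerivAt v (-⟪c'' s, v s⟫ • c' s) s)
    (horth : ∀ s ∈ Icc a b, ⟪v s, c' s⟫ = 0) :
    ∀ s ∈ Icc a b, ‖v s‖ = ‖v a‖ := by
  have hsq : ∀ s ∈ Icc a b, ‖v s‖ ^ 2 = ‖v a‖ ^ 2 := by
    refine eq_of_hasDerivAt_zero_on_Icc fun s hs => ?_
    refine (hv s hs).norm_sq.congr_deriv ?_
    rw [real_inner_smul_right, horth s hs]
    ring
  exact fun s hs => (sq_eq_sq₀ (norm_nonneg _) (norm_nonneg _)).mp (hsq s hs)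

end FrameODE

theorem frame_ode_orthonormal_frame_general
    (L : ℝ)
    (c' c'' v : ℝ → EuclideanSpace ℝ (Fin 3))
    (hc' : ∀ s ∈ Set.Icc 0 L, HasDerivAt c' (c'' s) s)
    (hunit : ∀ s ∈ Set.Icc 0 L, ‖c' s‖ = 1)
    (hv : ∀ s ∈ Set.Icc 0 L, HasDerivAt v (-⟪c'' s, v s⟫ • c' s) s)
    (hv0norm : ‖v 0‖ = 1) (hv0 : ⟪v 0, c' 0⟫ = 0) :
    ∀ s ∈ Set.Icc 0 L,
      ‖v s‖ = 1 ∧ ⟪v s, c' s⟫ = 0 ∧ ‖cross3 (c' s) (v s)‖ = 1 ∧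
        ⟪cross3 (c' s) (v s), c' s⟫ = 0 ∧ ⟪cross3 (c' s) (v s), v s⟫ = 0 := by
  have horth : ∀ s ∈ Icc 0 L, ⟪v s, c' s⟫ = 0 := fun s hs =>
    (frameODE_inner_tangent_eq hc' hunit hv s hs).trans hv0
  intro s hs
  have hnorm : ‖v s‖ = 1 := (frameODE_norm_eq hv horth s hs).trans hv0norm
  have hcv : ⟪c' s, v s⟫ = 0 := (real_inner_comm _ _).trans (horth s hs)
  exact ⟨hnorm, horth s hs, norm_cross3_of_orthonormal (hunit s hs) hnorm hcv,
    inner_cross3_left _ _, inner_cross3_right _ _⟩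

/-- For an arc-length parameterized curve `c`, a solution `v` of the frame ODE with
unit initial value orthogonal to the tangent yields an orthonormal frame
`{c'(s), v(s), c'(s) × v(s)}` for every `s ∈ [0,L]`. -/
theorem frame_ode_orthonormal_frame
    (L : ℝ) (hL : 0 ≤ L)
    (c c' c'' v : ℝ → EuclideanSpace ℝ (Fin 3))
    (hc : ∀ s ∈ Set.Icc 0 L, HasDerivAt c (c' s) s)
    (hc' : ∀ s ∈ Set.Icc 0 L, HasDerivAt c' (c'' s) s)
    (hunit : ∀ s ∈ Set.Icc 0 L, ‖c' s‖ = 1)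
    (hv : ∀ s ∈ Set.Icc 0 L, HasDerivAt v (-⟪c'' s, v s⟫ • c' s) s)
    (hv0norm : ‖v 0‖ = 1) (hv0 : ⟪v 0, c' 0⟫ = 0) :
    ∀ s ∈ Set.Icc 0 L,
      ‖v s‖ = 1 ∧ ⟪v s, c' s⟫ = 0 ∧ ‖cross3 (c' s) (v s)‖ = 1 ∧
        ⟪cross3 (c' s) (v s), c' s⟫ = 0 ∧ ⟪cross3 (c' s) (v s), v s⟫ = 0 :=
  frame_ode_orthonormal_frame_general L c' c'' v hc' hunit hv hv0norm hv0
end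

section
/- Let c : [0,L] → ℝ³ be twice continuously differentiable with ‖c'(s)‖ = 1 for all s and c'(0) = (0,0,1). Suppose e₁ : ℝ × [0,L] → ℝ³ is such that for every θ the map s ↦ e₁(θ,s) is differentiable, solves the frame ODE ∂ₛe₁(θ,s) = -(c''(s)·e₁(θ,s)) c'(s), and satisfies e₁(θ,0) = (cos θ, sin θ, 0). Define e₂(θ,s) = c'(s) × e₁(θ,s). Then for every θ and every s ∈ [0,L], the partial derivatives in θ exist and satisfy ∂_θ e₁(θ,s) = e₂(θ,s) and ∂_θ e₂(θ,s) = -e₁(θ,s). -/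
open scoped RealInnerProductSpace

/-!
The frame ODE is linear with uniquely determined solutions, so comparing initial values gives
`e₁(θ,·) = cos θ • e₁(0,·) + sin θ • e₁(π/2,·)`. It also preserves orthogonality to `c'`, and
because `c'' ⊥ c'` the map `v ↦ c' × v` sends solutions orthogonal to `c'` to solutions; comparing
initial values again, `e₂(θ,·) = c' × e₁(θ,·) = e₁(θ + π/2,·)`. Hence `∂_θ e₁(θ,s) = e₁(θ + π/2,s)
= e₂(θ,s)` and `∂_θ e₂(θ,s) = e₁(θ + π,s) = -e₁(θ,s)`.
-/

open Set Real

section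

variable {E : Type*} [NormedAddCommGroup E] [InnerProductSpace ℝ E]

theorem lipschitzWith_neg_inner_smul (a b : E) :
    LipschitzWith (‖a‖₊ * ‖b‖₊) fun x => -⟪a, x⟫ • b := by
  refine LipschitzWith.of_dist_le_mul fun x y => ?_
  calc dist (-⟪a, x⟫ • b) (-⟪a, y⟫ • b) = |⟪a, x - y⟫| * ‖b‖ := by
        rw [dist_eq_norm, ← sub_smul, norm_smul, inner_sub_right, norm_eq_abs, ← abs_neg,
          neg_sub_neg, neg_sub]
    _ ≤ ‖a‖ * ‖x - y‖ * ‖b‖ := by gcongr; exact abs_real_inner_le_norm a (x - y)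
    _ = ‖a‖ * ‖b‖ * dist x y := by rw [dist_eq_norm]; ring

theorem inner_deriv_eq_zero_of_norm_eq_one {f f' : ℝ → E} {a b : ℝ} (hab : a < b)
    (hf : ∀ t ∈ Icc a b, HasDerivAt f (f' t) t) (hunit : ∀ t ∈ Icc a b, ‖f t‖ = 1) :
    ∀ t ∈ Icc a b, ⟪f' t, f t⟫ = 0 := by
  intro t ht
  have hsq : EqOn (fun x => ⟪f x, f x⟫) (fun _ => 1) (Icc a b) := fun x hx => by
    simp only [real_inner_self_eq_norm_sq, hunit x hx, one_pow]
  have h := (uniqueDiffOn_Icc hab t ht).eq_deriv _ ((hf t ht).inner ℝ (hf t ht)).hasDerivWithinAt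
    ((hasDerivWithinAt_const t _ 1).congr hsq (hsq ht))
  rw [real_inner_comm] at h
  linarith

theorem hasDerivAt_cos_smul_add_sin_smul (u w : E) (φ : ℝ) :
    HasDerivAt (fun φ => cos φ • u + sin φ • w) (cos (φ + π / 2) • u + sin (φ + π / 2) • w) φ := by
  rw [cos_add_pi_div_two, sin_add_pi_div_two]
  exact ((hasDerivAt_cos φ).smul_const u).add ((hasDerivAt_sin φ).smul_const w)

def IsFrameSolution (L : ℝ) (c' c'' v : ℝ → E) : Prop :=
  ∀ s ∈ Icc 0 L, HasDerivAt v (-⟪c'' s, v s⟫ • c' s) s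

namespace IsFrameSolution

variable {L : ℝ} {c' c'' v w : ℝ → E}

theorem add (hv : IsFrameSolution L c' c'' v) (hw : IsFrameSolution L c' c'' w) :
    IsFrameSolution L c' c'' (v + w) := fun s hs =>
  ((hv s hs).add (hw s hs)).congr_deriv (by simp only [Pi.add_apply, inner_add_right]; module)

theorem const_smul (r : ℝ) (hv : IsFrameSolution L c' c'' v) :
    IsFrameSolution L c' c'' (r • v) := fun s hs =>
  ((hv s hs).const_smul r).congr_deriv (by simp only [Pi.smul_apply, inner_smul_right]; module)

theorem continuousOn (hv : IsFrameSolution L c' c'' v) : ContinuousOn v (Icc 0 L) :=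
  fun s hs => (hv s hs).continuousAt.continuousWithinAt

theorem eqOn (hc' : ContinuousOn c' (Icc 0 L)) (hc'' : ContinuousOn c'' (Icc 0 L))
    (hv : IsFrameSolution L c' c'' v) (hw : IsFrameSolution L c' c'' w) (h0 : v 0 = w 0) :
    EqOn v w (Icc 0 L) := by
  obtain ⟨K, hK⟩ := isCompact_Icc.exists_bound_of_continuousOn (hc''.norm.mul hc'.norm)
  have hlip : ∀ s ∈ Ico 0 L,
      LipschitzOnWith K.toNNReal (fun x => -⟪c'' s, x⟫ • c' s) univ := fun s hs =>
    ((lipschitzWith_neg_inner_smul _ _).weaken (NNReal.le_toNNReal_of_coe_le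
      ((le_abs_self _).trans (hK s (Ico_subset_Icc_self hs))))).lipschitzOnWith
  exact ODE_solution_unique_of_mem_Icc_right hlip hv.continuousOn
    (fun s hs => (hv s (Ico_subset_Icc_self hs)).hasDerivWithinAt) (fun _ _ => trivial)
    hw.continuousOn (fun s hs => (hw s (Ico_subset_Icc_self hs)).hasDerivWithinAt)
    (fun _ _ => trivial) h0

theorem inner_eq_zero (hc' : ∀ s ∈ Icc 0 L, HasDerivAt c' (c'' s) s)
    (hunit : ∀ s ∈ Icc 0 L, ‖c' s‖ = 1) (hv : IsFrameSolution L c' c'' v)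
    (h0 : ⟪c' 0, v 0⟫ = 0) : ∀ s ∈ Icc 0 L, ⟪c' s, v s⟫ = 0 := by
  have hderiv : ∀ s ∈ Icc 0 L, HasDerivAt (fun t => ⟪c' t, v t⟫) 0 s := fun s hs =>
    ((hc' s hs).inner ℝ (hv s hs)).congr_deriv (by
      rw [inner_smul_right, real_inner_self_eq_norm_sq, hunit s hs]; ring)
  intro s hs
  rw [constant_of_has_deriv_right_zero (fun t ht => (hderiv t ht).continuousAt.continuousWithinAt)
    (fun t ht => (hderiv t (Ico_subset_Icc_self ht)).hasDerivWithinAt) s hs, h0]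

end IsFrameSolution

end

local notation "ℝ³" => EuclideanSpace ℝ (Fin 3)

noncomputable def cross3L : ℝ³ →L[ℝ] ℝ³ →L[ℝ] ℝ³ :=
  let ofLp : ℝ³ →ₗ[ℝ] Fin 3 → ℝ := (WithLp.linearEquiv 2 ℝ (Fin 3 → ℝ)).toLinearMap
  ((crossProduct.compl₂ ofLp).compr₂ (WithLp.linearEquiv 2 ℝ (Fin 3 → ℝ)).symm.toLinearMap
    ∘ₗ ofLp).toContinuousBilinearMap

theorem cross3L_apply (a b : ℝ³) : cross3L a b = cross3 a b := rfl

theorem cross3_self (a : ℝ³) : cross3 a a = 0 := by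
  simp [cross3, ← cross_apply]

theorem cross3_smul_right (r : ℝ) (a b : ℝ³) : cross3 a (r • b) = r • cross3 a b := by
  simp only [← cross3L_apply, map_smul]

theorem HasDerivAt.cross3 {a b : ℝ → ℝ³} {a' b' : ℝ³} {t : ℝ}
    (ha : HasDerivAt a a' t) (hb : HasDerivAt b b' t) :
    HasDerivAt (fun u => cross3 (a u) (b u)) (cross3 (a t) b' + cross3 a' (b t)) t :=
  cross3L.hasDerivAt_of_bilinear (fun _ => ha) (fun _ => hb)

theorem inner_eq_sum_three (a b : ℝ³) : ⟪a, b⟫ = a 0 * b 0 + a 1 * b 1 + a 2 * b 2 := by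
  simp [PiLp.inner_apply, Fin.sum_univ_three, mul_comm]

-- `a` and `e` lie in the plane `b⊥`, so `a × e` is a multiple of its unit normal `b`.
theorem cross3_eq_neg_inner_cross3_smul {a b e : ℝ³} (hb : ‖b‖ = 1) (hab : ⟪a, b⟫ = 0)
    (hbe : ⟪b, e⟫ = 0) : cross3 a e = -⟪a, cross3 b e⟫ • b := by
  have hbb : b 0 * b 0 + b 1 * b 1 + b 2 * b 2 = 1 := by
    rw [← inner_eq_sum_three, real_inner_self_eq_norm_sq, hb, one_pow]
  rw [inner_eq_sum_three] at hab hbe ⊢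
  ext i
  fin_cases i <;> simp [cross3]
  · linear_combination (a 2 * e 1 - a 1 * e 2) * hbb + (b 1 * e 2 - b 2 * e 1) * hab +
      (a 1 * b 2 - a 2 * b 1) * hbe
  · linear_combination (a 0 * e 2 - a 2 * e 0) * hbb + (b 2 * e 0 - b 0 * e 2) * hab +
      (a 2 * b 0 - a 0 * b 2) * hbe
  · linear_combination (a 1 * e 0 - a 0 * e 1) * hbb + (b 0 * e 1 - b 1 * e 0) * hab +
      (a 0 * b 1 - a 1 * b 0) * hbe

theorem IsFrameSolution.cross3 {L : ℝ} {c' c'' v : ℝ → ℝ³} (hL : 0 < L)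
    (hc' : ∀ s ∈ Icc 0 L, HasDerivAt c' (c'' s) s) (hunit : ∀ s ∈ Icc 0 L, ‖c' s‖ = 1)
    (hv : IsFrameSolution L c' c'' v) (h0 : ⟪c' 0, v 0⟫ = 0) :
    IsFrameSolution L c' c'' fun s => cross3 (c' s) (v s) := fun s hs => by
  have horth := inner_deriv_eq_zero_of_norm_eq_one hL hc' hunit s hs
  have hperp := hv.inner_eq_zero hc' hunit h0 s hs
  refine ((hc' s hs).cross3 (hv s hs)).congr_deriv ?_
  rw [cross3_smul_right, cross3_self, smul_zero, zero_add,
    cross3_eq_neg_inner_cross3_smul (hunit s hs) horth hperp]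

theorem theta_derivatives_of_frame_general
    (L : ℝ)
    (c' c'' : ℝ → EuclideanSpace ℝ (Fin 3))
    (e₁ : ℝ → ℝ → EuclideanSpace ℝ (Fin 3))
    (hc' : ∀ s ∈ Set.Icc 0 L, HasDerivAt c' (c'' s) s)
    (hc''cont : ContinuousOn c'' (Set.Icc 0 L))
    (hunit : ∀ s ∈ Set.Icc 0 L, ‖c' s‖ = 1)
    (hc'0 : c' 0 = ![(0 : ℝ), 0, 1])
    (he₁ : ∀ θ : ℝ, ∀ s ∈ Set.Icc 0 L,
      HasDerivAt (e₁ θ) (-⟪c'' s, e₁ θ s⟫ • c' s) s)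
    (he₁0 : ∀ θ : ℝ, e₁ θ 0 = ![Real.cos θ, Real.sin θ, 0]) :
    ∀ θ : ℝ, ∀ s ∈ Set.Icc 0 L,
      HasDerivAt (fun φ => e₁ φ s) (cross3 (c' s) (e₁ θ s)) θ ∧
        HasDerivAt (fun φ => cross3 (c' s) (e₁ φ s)) (-(e₁ θ s)) θ := by
  intro θ s hs
  have hsol : ∀ φ, IsFrameSolution L c' c'' (e₁ φ) := he₁
  have hc'cont : ContinuousOn c' (Icc 0 L) := fun t ht =>
    (hc' t ht).continuousAt.continuousWithinAt
  have hrot : ∀ φ, e₁ φ s = cos φ • e₁ 0 s + sin φ • e₁ (π / 2) s := fun φ =>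
    (hsol φ).eqOn hc'cont hc''cont (((hsol 0).const_smul _).add ((hsol _).const_smul _))
      (by ext i; fin_cases i <;> simp [he₁0]) hs
  have hshift : ∀ φ, cross3 (c' s) (e₁ φ s) = e₁ (φ + π / 2) s := by
    intro φ
    have h0 : cross3 (c' 0) (e₁ φ 0) = e₁ (φ + π / 2) 0 := by
      ext i; fin_cases i <;> simp [cross3, hc'0, he₁0, cos_add_pi_div_two, sin_add_pi_div_two]
    -- `c'' ⊥ c'` is only known when `L > 0`, so the initial point is treated separately.
    rcases hs.1.eq_or_lt with rfl | hs0
    · exact h0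
    · exact ((hsol φ).cross3 (hs0.trans_le hs.2) hc' hunit
        (by simp [inner_eq_sum_three, hc'0, he₁0])).eqOn hc'cont hc''cont (hsol _) h0 hs
  have hderiv : ∀ φ, HasDerivAt (fun φ => e₁ φ s) (e₁ (φ + π / 2) s) φ := fun φ => by
    rw [funext hrot, hrot (φ + π / 2)]
    exact hasDerivAt_cos_smul_add_sin_smul _ _ φ
  have hantipodal : e₁ (θ + π / 2 + π / 2) s = -e₁ θ s := by
    rw [hrot, hrot θ, add_assoc, add_halves, cos_add_pi, sin_add_pi]
    module
  refine ⟨hshift θ ▸ hderiv θ, ?_⟩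
  simpa only [hshift, hantipodal] using (hderiv (θ + π / 2)).comp_add_const θ (π / 2)

/-- For the rotation-minimizing frame `e₁(θ,·)` solving the frame ODE with initial value
`(cos θ, sin θ, 0)`, and `e₂ = c' × e₁`, the `θ`-derivatives satisfy
`∂_θ e₁ = e₂` and `∂_θ e₂ = -e₁`. -/
theorem theta_derivatives_of_frame
    (L : ℝ) (hL : 0 ≤ L)
    (c c' c'' : ℝ → EuclideanSpace ℝ (Fin 3))
    (e₁ : ℝ → ℝ → EuclideanSpace ℝ (Fin 3))
    (hc : ∀ s ∈ Set.Icc 0 L, HasDerivAt c (c' s) s)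
    (hc' : ∀ s ∈ Set.Icc 0 L, HasDerivAt c' (c'' s) s)
    (hc''cont : ContinuousOn c'' (Set.Icc 0 L))
    (hunit : ∀ s ∈ Set.Icc 0 L, ‖c' s‖ = 1)
    (hc'0 : c' 0 = ![(0 : ℝ), 0, 1])
    (he₁ : ∀ θ : ℝ, ∀ s ∈ Set.Icc 0 L,
      HasDerivAt (e₁ θ) (-⟪c'' s, e₁ θ s⟫ • c' s) s)
    (he₁0 : ∀ θ : ℝ, e₁ θ 0 = ![Real.cos θ, Real.sin θ, 0]) :
    ∀ θ : ℝ, ∀ s ∈ Set.Icc 0 L,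
      HasDerivAt (fun φ => e₁ φ s) (cross3 (c' s) (e₁ θ s)) θ ∧
        HasDerivAt (fun φ => cross3 (c' s) (e₁ φ s)) (-(e₁ θ s)) θ :=
  theta_derivatives_of_frame_general L c' c'' e₁ hc' hc''cont hunit hc'0 he₁ he₁0
end

section
/- Let c : [0,L] → ℝ³ be twice continuously differentiable with ‖c'(s)‖ = 1 for all s and c'(0) = (0,0,1). Suppose e₁ : ℝ × [0,L] → ℝ³ is such that for every θ the map s ↦ e₁(θ,s) is differentiable, solves the frame ODE ∂ₛe₁(θ,s) = -(c''(s)·e₁(θ,s)) c'(s), and satisfies e₁(θ,0) = (cos θ, sin θ, 0); set e₂(θ,s) = c'(s) × e₁(θ,s). Then there exists a map R : [0,L] → Matrix(3,3,ℝ) such that each R(s) is orthogonal with det R(s) = 1, and for all θ and all s ∈ [0,L]: e₁(θ,s) = R(s) e₁(θ,0), e₂(θ,s) = R(s) e₂(θ,0), and c'(s) = R(s) c'(0). -/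
open scoped RealInnerProductSpace Matrix

/-! Solutions of the frame ODE stay orthogonal to the unit tangent `c'`, and the inner product of
two solutions orthogonal to `c'` is constant; applied to the difference of two solutions with the
same initial value this gives uniqueness. Hence `e₁(θ,s) = cos θ e₁(0,s) + sin θ e₁(π/2,s)`, and
the matrix with columns `e₁(0,s), e₁(π/2,s), c'(s)` is orthogonal, equals `1` at `s = 0`, and so
has determinant `1` by continuity. Rotations commute with the cross product, which handles `e₂`. -/

open Set Matrix

theorem ofLp_cross3 (a b : EuclideanSpace ℝ (Fin 3)) : (cross3 a b).ofLp = a.ofLp ⨯₃ b.ofLp := by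
  rw [cross_apply]; rfl

namespace Matrix

variable {R : Type*} [CommRing R]

theorem transpose_mulVec_cross_mulVec (A : Matrix (Fin 3) (Fin 3) R) (a b : Fin 3 → R) :
    Aᵀ *ᵥ ((A *ᵥ a) ⨯₃ (A *ᵥ b)) = A.det • (a ⨯₃ b) := by
  ext i
  fin_cases i <;>
    simp [cross_apply, mulVec, dotProduct, det_fin_three, Fin.sum_univ_three] <;> ring

theorem mulVec_cross_of_transpose_mul_self_eq_one {A : Matrix (Fin 3) (Fin 3) R}
    (hA : Aᵀ * A = 1) (hdet : A.det = 1) (a b : Fin 3 → R) :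
    A *ᵥ (a ⨯₃ b) = (A *ᵥ a) ⨯₃ (A *ᵥ b) := by
  rw [← one_smul R (a ⨯₃ b), ← hdet, ← transpose_mulVec_cross_mulVec, mulVec_mulVec,
    mul_eq_one_comm.mp hA, one_mulVec]

theorem det_eq_one_of_continuousOn {X n : Type*} [TopologicalSpace X] [Fintype n] [DecidableEq n]
    {S : Set X} (hS : IsPreconnected S) {A : X → Matrix n n ℝ} (hA : ContinuousOn A S)
    (horth : ∀ x ∈ S, (A x)ᵀ * A x = 1) {x₀ : X} (hx₀ : x₀ ∈ S) (h₀ : (A x₀).det = 1) :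
    ∀ x ∈ S, (A x).det = 1 := by
  refine hS.eq_of_sq_eq ((continuous_id.matrix_det).comp_continuousOn hA) continuousOn_const
    (fun x hx => ?_) (fun _ => one_ne_zero) hx₀ h₀
  have := congrArg det (horth x hx)
  rw [det_mul, det_transpose, det_one] at this
  simp [sq, this]

def ofCols {m n : Type*} (v : n → EuclideanSpace ℝ m) : Matrix m n ℝ := of fun i j => v j i

theorem ofCols_transpose_mul_self {m n : Type*} [Fintype m] (v : n → EuclideanSpace ℝ m) :
    (ofCols v)ᵀ * ofCols v = gram ℝ v := by
  ext i j
  simp [ofCols, mul_apply, PiLp.inner_apply, mul_comm]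

theorem ofCols_mulVec {m n : Type*} [Fintype n] (v : n → EuclideanSpace ℝ m) (x : n → ℝ) :
    ofCols v *ᵥ x = (∑ j, x j • v j).ofLp := by
  ext i
  simp [ofCols, mulVec, dotProduct, mul_comm]

theorem _root_.ContinuousOn.matrix_ofCols {X m n : Type*} [TopologicalSpace X] {S : Set X}
    {v : X → n → EuclideanSpace ℝ m} (hv : ∀ j, ContinuousOn (fun x => v x j) S) :
    ContinuousOn (fun x => ofCols (v x)) S :=
  continuousOn_pi.2 fun i => continuousOn_pi.2 fun j =>
    (PiLp.continuous_apply 2 _ i).comp_continuousOn (hv j)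

end Matrix

theorem eq_of_hasDerivAt_zero {E : Type*} [NormedAddCommGroup E] [NormedSpace ℝ E] {f : ℝ → E}
    {a b : ℝ} (hf : ∀ x ∈ Icc a b, HasDerivAt f 0 x) : ∀ x ∈ Icc a b, f x = f a :=
  constant_of_has_deriv_right_zero (fun x hx => (hf x hx).continuousAt.continuousWithinAt)
    fun x hx => (hf x (Ico_subset_Icc_self hx)).hasDerivWithinAt

section FrameODE

variable {E : Type*} [NormedAddCommGroup E] [InnerProductSpace ℝ E] {L : ℝ} {T κ u v : ℝ → E}

def SolvesFrameODE (L : ℝ) (T κ v : ℝ → E) : Prop :=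
  ∀ s ∈ Icc 0 L, HasDerivAt v (-⟪κ s, v s⟫ • T s) s

namespace SolvesFrameODE

theorem continuousOn (hv : SolvesFrameODE L T κ v) : ContinuousOn v (Icc 0 L) :=
  fun s hs => (hv s hs).continuousAt.continuousWithinAt

theorem add (hu : SolvesFrameODE L T κ u) (hv : SolvesFrameODE L T κ v) :
    SolvesFrameODE L T κ (u + v) := fun s hs =>
  ((hu s hs).add (hv s hs)).congr_deriv (by simp only [Pi.add_apply, inner_add_right]; module)

theorem sub (hu : SolvesFrameODE L T κ u) (hv : SolvesFrameODE L T κ v) :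
    SolvesFrameODE L T κ (u - v) := fun s hs =>
  ((hu s hs).sub (hv s hs)).congr_deriv (by simp only [Pi.sub_apply, inner_sub_right]; module)

theorem const_smul (hv : SolvesFrameODE L T κ v) (a : ℝ) :
    SolvesFrameODE L T κ (a • v) := fun s hs =>
  ((hv s hs).const_smul a).congr_deriv
    (by simp only [Pi.smul_apply, real_inner_smul_right]; module)

theorem inner_tangent_eq (hT : ∀ s ∈ Icc 0 L, HasDerivAt T (κ s) s)
    (hunit : ∀ s ∈ Icc 0 L, ‖T s‖ = 1) (hv : SolvesFrameODE L T κ v) :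
    ∀ s ∈ Icc 0 L, ⟪T s, v s⟫ = ⟪T 0, v 0⟫ :=
  eq_of_hasDerivAt_zero fun s hs => ((hT s hs).inner ℝ (hv s hs)).congr_deriv (by
    rw [real_inner_smul_right, real_inner_self_eq_norm_sq, hunit s hs]; ring)

theorem inner_eq (hT : ∀ s ∈ Icc 0 L, HasDerivAt T (κ s) s)
    (hunit : ∀ s ∈ Icc 0 L, ‖T s‖ = 1) (hu : SolvesFrameODE L T κ u)
    (hv : SolvesFrameODE L T κ v) (hu₀ : ⟪T 0, u 0⟫ = 0) (hv₀ : ⟪T 0, v 0⟫ = 0) :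
    ∀ s ∈ Icc 0 L, ⟪u s, v s⟫ = ⟪u 0, v 0⟫ :=
  eq_of_hasDerivAt_zero fun s hs => ((hu s hs).inner ℝ (hv s hs)).congr_deriv (by
    rw [real_inner_smul_left, real_inner_smul_right, real_inner_comm (T s),
      inner_tangent_eq hT hunit hu s hs, inner_tangent_eq hT hunit hv s hs, hu₀, hv₀]
    ring)

theorem eqOn (hT : ∀ s ∈ Icc 0 L, HasDerivAt T (κ s) s)
    (hunit : ∀ s ∈ Icc 0 L, ‖T s‖ = 1) (hu : SolvesFrameODE L T κ u)
    (hv : SolvesFrameODE L T κ v) (h₀ : u 0 = v 0) : EqOn u v (Icc 0 L) := fun s hs => by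
  have hd₀ : (u - v) 0 = 0 := sub_eq_zero.mpr h₀
  have := inner_eq hT hunit (hu.sub hv) (hu.sub hv) (by rw [hd₀, inner_zero_right])
    (by rw [hd₀, inner_zero_right]) s hs
  rwa [hd₀, inner_zero_right, inner_self_eq_zero, Pi.sub_apply, sub_eq_zero] at this

theorem gram_eq (hT : ∀ s ∈ Icc 0 L, HasDerivAt T (κ s) s)
    (hunit : ∀ s ∈ Icc 0 L, ‖T s‖ = 1) (hu : SolvesFrameODE L T κ u)
    (hv : SolvesFrameODE L T κ v) (hu₀ : ⟪T 0, u 0⟫ = 0) (hv₀ : ⟪T 0, v 0⟫ = 0) :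
    ∀ s ∈ Icc 0 L, Matrix.gram ℝ ![u s, v s, T s] = Matrix.gram ℝ ![u 0, v 0, T 0] := by
  intro s hs
  have hT_norm : ⟪T s, T s⟫ = ⟪T 0, T 0⟫ := by
    rw [real_inner_self_eq_norm_sq, real_inner_self_eq_norm_sq, hunit s hs,
      hunit 0 ⟨le_rfl, hs.1.trans hs.2⟩]
  ext i j
  fin_cases i <;> fin_cases j <;>
    simp only [Matrix.gram_apply, Matrix.cons_val_zero, Matrix.cons_val_one, Matrix.cons_val_two,
      Matrix.head_cons, Matrix.tail_cons, Fin.mk_one, Fin.zero_eta, Fin.reduceFinMk,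
      inner_eq hT hunit hu hv hu₀ hv₀ s hs, inner_eq hT hunit hv hu hv₀ hu₀ s hs,
      inner_eq hT hunit hu hu hu₀ hu₀ s hs, inner_eq hT hunit hv hv hv₀ hv₀ s hs,
      inner_tangent_eq hT hunit hu s hs, inner_tangent_eq hT hunit hv s hs,
      real_inner_comm (T _), hT_norm]

end SolvesFrameODE

end FrameODE

theorem exists_rotation_of_frame_general
    (L : ℝ)
    (c' c'' : ℝ → EuclideanSpace ℝ (Fin 3))
    (e₁ : ℝ → ℝ → EuclideanSpace ℝ (Fin 3))
    (hc' : ∀ s ∈ Set.Icc 0 L, HasDerivAt c' (c'' s) s)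
    (hunit : ∀ s ∈ Set.Icc 0 L, ‖c' s‖ = 1)
    (hc'0 : c' 0 = ![(0 : ℝ), 0, 1])
    (he₁ : ∀ θ : ℝ, ∀ s ∈ Set.Icc 0 L,
      HasDerivAt (e₁ θ) (-⟪c'' s, e₁ θ s⟫ • c' s) s)
    (he₁0 : ∀ θ : ℝ, e₁ θ 0 = ![Real.cos θ, Real.sin θ, 0]) :
    ∃ R : ℝ → Matrix (Fin 3) (Fin 3) ℝ,
      ∀ s ∈ Set.Icc 0 L,
        (R s)ᵀ * R s = 1 ∧ (R s).det = 1 ∧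
          (∀ θ : ℝ, (R s).mulVec (e₁ θ 0) = e₁ θ s) ∧
          (∀ θ : ℝ, (R s).mulVec (cross3 (c' 0) (e₁ θ 0)) = cross3 (c' s) (e₁ θ s)) ∧
          (R s).mulVec (c' 0) = c' s := by
  set u := e₁ 0
  set v := e₁ (Real.pi / 2)
  set R : ℝ → Matrix (Fin 3) (Fin 3) ℝ := fun s => ofCols ![u s, v s, c' s]
  have hR₀ : R 0 = 1 := by
    ext i j
    fin_cases i <;> fin_cases j <;> simp [R, u, v, ofCols, he₁0, hc'0]
  have hu : SolvesFrameODE L c' c'' u := he₁ 0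
  have hv : SolvesFrameODE L c' c'' v := he₁ (Real.pi / 2)
  have horth : ∀ s ∈ Icc 0 L, (R s)ᵀ * R s = 1 := fun s hs => by
    have hu₀ : ⟪c' 0, u 0⟫ = 0 := by simp [u, PiLp.inner_apply, he₁0, hc'0, Fin.sum_univ_three]
    have hv₀ : ⟪c' 0, v 0⟫ = 0 := by simp [v, PiLp.inner_apply, he₁0, hc'0, Fin.sum_univ_three]
    rw [ofCols_transpose_mul_self, hu.gram_eq hc' hunit hv hu₀ hv₀ s hs,
      ← ofCols_transpose_mul_self]
    change (R 0)ᵀ * R 0 = 1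
    rw [hR₀, transpose_one, one_mul]
  have hRcont : ContinuousOn R (Icc 0 L) := ContinuousOn.matrix_ofCols fun j => by
    fin_cases j
    exacts [hu.continuousOn, hv.continuousOn,
      fun s hs => (hc' s hs).continuousAt.continuousWithinAt]
  have hrot_e₁ : ∀ θ, ∀ s ∈ Icc 0 L, R s *ᵥ e₁ θ 0 = e₁ θ s := fun θ s hs => by
    have h₀ : e₁ θ 0 = (Real.cos θ • u + Real.sin θ • v) 0 := by
      ext i
      fin_cases i <;> simp [u, v, he₁0]
    rw [SolvesFrameODE.eqOn hc' hunit (he₁ θ) ((hu.const_smul _).add (hv.const_smul _)) h₀ hs]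
    simp [R, ofCols_mulVec, he₁0, Fin.sum_univ_three]
  have hrot_c' : ∀ s, R s *ᵥ c' 0 = c' s := fun s => by
    simp [R, ofCols_mulVec, hc'0, Fin.sum_univ_three]
  refine ⟨R, fun s hs => ?_⟩
  have hdet : (R s).det = 1 := det_eq_one_of_continuousOn isPreconnected_Icc hRcont horth
    ⟨le_rfl, hs.1.trans hs.2⟩ (by rw [hR₀, det_one]) s hs
  refine ⟨horth s hs, hdet, fun θ => hrot_e₁ θ s hs, fun θ => ?_, hrot_c' s⟩
  rw [ofLp_cross3, ofLp_cross3, mulVec_cross_of_transpose_mul_self_eq_one (horth s hs) hdet,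
    hrot_e₁ θ s hs, hrot_c' s]

/-- There is a rotation-matrix valued function `R` carrying the initial frame
`{e₁(θ,0), e₂(θ,0), c'(0)}` to the frame `{e₁(θ,s), e₂(θ,s), c'(s)}`. -/
theorem exists_rotation_of_frame
    (L : ℝ) (hL : 0 ≤ L)
    (c c' c'' : ℝ → EuclideanSpace ℝ (Fin 3))
    (e₁ : ℝ → ℝ → EuclideanSpace ℝ (Fin 3))
    (hc : ∀ s ∈ Set.Icc 0 L, HasDerivAt c (c' s) s)
    (hc' : ∀ s ∈ Set.Icc 0 L, HasDerivAt c' (c'' s) s)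
    (hc''cont : ContinuousOn c'' (Set.Icc 0 L))
    (hunit : ∀ s ∈ Set.Icc 0 L, ‖c' s‖ = 1)
    (hc'0 : c' 0 = ![(0 : ℝ), 0, 1])
    (he₁ : ∀ θ : ℝ, ∀ s ∈ Set.Icc 0 L,
      HasDerivAt (e₁ θ) (-⟪c'' s, e₁ θ s⟫ • c' s) s)
    (he₁0 : ∀ θ : ℝ, e₁ θ 0 = ![Real.cos θ, Real.sin θ, 0]) :
    ∃ R : ℝ → Matrix (Fin 3) (Fin 3) ℝ,
      ∀ s ∈ Set.Icc 0 L,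
        (R s)ᵀ * R s = 1 ∧ (R s).det = 1 ∧
          (∀ θ : ℝ, (R s).mulVec (e₁ θ 0) = e₁ θ s) ∧
          (∀ θ : ℝ, (R s).mulVec (cross3 (c' 0) (e₁ θ 0)) = cross3 (c' s) (e₁ θ s)) ∧
          (R s).mulVec (c' 0) = c' s :=
  exists_rotation_of_frame_general L c' c'' e₁ hc' hunit hc'0 he₁ he₁0
end

section
/- Let c : [0,L] → ℝ³ be differentiable with tangent T = c', and let N, B : [0,L] → ℝ³ be differentiable maps such that for every s the vectors N(s) and B(s) are unit vectors with N(s)·B(s) = 0, N(s)·T(s) = 0, B(s)·T(s) = 0, and suppose there are functions κ, τ : [0,L] → ℝ with N'(s) = -κ(s)T(s) + τ(s)B(s) and B'(s) = -τ(s)N(s) (the Serret–Frenet equations). Fix r_δ > 0 and define e₁(θ,s) = cos θ · N(s) - sin θ · B(s) and S(θ,s) = c(s) + r_δ e₁(θ,s). Then for all θ and all s ∈ [0,L], ∂_θ S(θ,s) · ∂ₛ S(θ,s) = -r_δ² τ(s). -/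
open scoped RealInnerProductSpace

/-!
Differentiating `S = c + r (cos θ N - sin θ B)` gives `∂_θ S = -r (sin θ N + cos θ B)` and, by the
Serret–Frenet equations, `∂ₛ S = T + r (cos θ (-κ T + τ B) + sin θ τ N)`. Orthonormality of
`{T, N, B}` kills every cross term, leaving `-r² τ (sin² θ + cos² θ) = -r² τ`.
-/

section PipeSurface

variable {E : Type*} [NormedAddCommGroup E] [InnerProductSpace ℝ E]

theorem hasDerivAt_pipe_angle (p u v : E) (r θ : ℝ) :
    HasDerivAt (fun φ => p + r • (Real.cos φ • u - Real.sin φ • v))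
      (r • (-Real.sin θ • u - Real.cos θ • v)) θ :=
  ((((Real.hasDerivAt_cos θ).smul_const u).sub
    ((Real.hasDerivAt_sin θ).smul_const v)).const_smul r).const_add p

theorem hasDerivAt_pipe_arclength {c N B : ℝ → E} {T N' B' : E} {s : ℝ} (r θ : ℝ)
    (hc : HasDerivAt c T s) (hN : HasDerivAt N N' s) (hB : HasDerivAt B B' s) :
    HasDerivAt (fun t => c t + r • (Real.cos θ • N t - Real.sin θ • B t))
      (T + r • (Real.cos θ • N' - Real.sin θ • B')) s :=
  hc.add (((hN.const_smul (Real.cos θ)).sub (hB.const_smul (Real.sin θ))).const_smul r)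

theorem inner_pipe_partials {T N B : E} (hN : ‖N‖ = 1) (hB : ‖B‖ = 1) (hNB : ⟪N, B⟫ = 0)
    (hNT : ⟪N, T⟫ = 0) (hBT : ⟪B, T⟫ = 0) (r θ κ τ : ℝ) :
    ⟪r • (-Real.sin θ • N - Real.cos θ • B),
      T + r • (Real.cos θ • (-κ • T + τ • B) - Real.sin θ • (-τ • N))⟫ = -(r ^ 2) * τ := by
  have hNN : ⟪N, N⟫ = 1 := by rw [real_inner_self_eq_norm_sq, hN, one_pow]
  have hBB : ⟪B, B⟫ = 1 := by rw [real_inner_self_eq_norm_sq, hB, one_pow]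
  have hBN : ⟪B, N⟫ = 0 := by rw [real_inner_comm, hNB]
  simp only [inner_add_right, inner_sub_left, inner_sub_right, real_inner_smul_left,
    real_inner_smul_right, hNN, hBB, hNB, hBN, hNT, hBT]
  linear_combination (-(r ^ 2 * τ)) * Real.sin_sq_add_cos_sq θ

end PipeSurface

theorem pipe_surface_metric_offdiagonal_general
    (L : ℝ) (rδ : ℝ)
    (c T N B : ℝ → EuclideanSpace ℝ (Fin 3)) (κ τ : ℝ → ℝ)
    (hc : ∀ s ∈ Set.Icc 0 L, HasDerivAt c (T s) s)
    (hNunit : ∀ s ∈ Set.Icc 0 L, ‖N s‖ = 1)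
    (hBunit : ∀ s ∈ Set.Icc 0 L, ‖B s‖ = 1)
    (hNB : ∀ s ∈ Set.Icc 0 L, ⟪N s, B s⟫ = 0)
    (hNT : ∀ s ∈ Set.Icc 0 L, ⟪N s, T s⟫ = 0)
    (hBT : ∀ s ∈ Set.Icc 0 L, ⟪B s, T s⟫ = 0)
    (hN : ∀ s ∈ Set.Icc 0 L, HasDerivAt N (-κ s • T s + τ s • B s) s)
    (hB : ∀ s ∈ Set.Icc 0 L, HasDerivAt B (-τ s • N s) s)
    (e₁ S : ℝ → ℝ → EuclideanSpace ℝ (Fin 3))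
    (he₁ : ∀ θ s, e₁ θ s = Real.cos θ • N s - Real.sin θ • B s)
    (hS : ∀ θ s, S θ s = c s + rδ • e₁ θ s) :
    ∀ θ : ℝ, ∀ s ∈ Set.Icc 0 L, ∀ Sθ Ss : EuclideanSpace ℝ (Fin 3),
      HasDerivAt (fun φ => S φ s) Sθ θ → HasDerivAt (fun t => S θ t) Ss s →
        ⟪Sθ, Ss⟫ = -(rδ ^ 2) * τ s := by
  intro θ s hs Sθ Ss hSθ hSs
  have hS' : S = fun φ t => c t + rδ • (Real.cos φ • N t - Real.sin φ • B t) := by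
    funext φ t; rw [hS, he₁]
  subst hS'
  rw [hSθ.unique (hasDerivAt_pipe_angle (c s) (N s) (B s) rδ θ),
    hSs.unique (hasDerivAt_pipe_arclength rδ θ (hc s hs) (hN s hs) (hB s hs))]
  exact inner_pipe_partials (hNunit s hs) (hBunit s hs) (hNB s hs) (hNT s hs) (hBT s hs) rδ θ
    (κ s) (τ s)

/-- For a Frenet frame `{T, N, B}` along a curve `c` satisfying the Serret–Frenet
equations, the pipe surface `S(θ,s) = c(s) + r_δ(cos θ N(s) - sin θ B(s))` has
`∂_θ S · ∂ₛ S = -r_δ² τ(s)`. -/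
theorem pipe_surface_metric_offdiagonal
    (L : ℝ) (hL : 0 ≤ L) (rδ : ℝ) (hrδ : 0 < rδ)
    (c T N B : ℝ → EuclideanSpace ℝ (Fin 3)) (κ τ : ℝ → ℝ)
    (hc : ∀ s ∈ Set.Icc 0 L, HasDerivAt c (T s) s)
    (hNunit : ∀ s ∈ Set.Icc 0 L, ‖N s‖ = 1)
    (hBunit : ∀ s ∈ Set.Icc 0 L, ‖B s‖ = 1)
    (hNB : ∀ s ∈ Set.Icc 0 L, ⟪N s, B s⟫ = 0)
    (hNT : ∀ s ∈ Set.Icc 0 L, ⟪N s, T s⟫ = 0)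
    (hBT : ∀ s ∈ Set.Icc 0 L, ⟪B s, T s⟫ = 0)
    (hN : ∀ s ∈ Set.Icc 0 L, HasDerivAt N (-κ s • T s + τ s • B s) s)
    (hB : ∀ s ∈ Set.Icc 0 L, HasDerivAt B (-τ s • N s) s)
    (e₁ S : ℝ → ℝ → EuclideanSpace ℝ (Fin 3))
    (he₁ : ∀ θ s, e₁ θ s = Real.cos θ • N s - Real.sin θ • B s)
    (hS : ∀ θ s, S θ s = c s + rδ • e₁ θ s) :
    ∀ θ : ℝ, ∀ s ∈ Set.Icc 0 L, ∀ Sθ Ss : EuclideanSpace ℝ (Fin 3),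
      HasDerivAt (fun φ => S φ s) Sθ θ → HasDerivAt (fun t => S θ t) Ss s →
        ⟪Sθ, Ss⟫ = -(rδ ^ 2) * τ s :=
  pipe_surface_metric_offdiagonal_general L rδ c T N B κ τ hc hNunit hBunit hNB hNT hBT hN hB e₁ S
    he₁ hS
end

section
/- Let R > 0 and let u : ℝ² → ℝ be continuous on the closed exterior region {x ∈ ℝ² : ‖x‖ ≥ R}, twice continuously differentiable with Δu = ∂₁²u + ∂₂²u = 0 on the open exterior {‖x‖ > R}, equal to 0 on the circle {‖x‖ = R}, and satisfying u(x) → 0 as ‖x‖ → ∞. Then u(x) = 0 for all x with ‖x‖ ≥ R. -/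
/-!
Weak maximum principle: if `Δ f ≥ 0` on an open set `U` inside a compact set `A`, then
`f + δ‖x‖²` has strictly positive Laplacian on `U`, while at an interior maximum every pure
second derivative is `≤ 0`; so its maximum over `A` is attained on `A \ U`, and letting `δ → 0`
bounds `f` on `A` by its values on `A \ U`. Applied to `±u` on an annulus `R ≤ ‖x‖ ≤ R'` whose
outer radius is so large that `|u| ≤ ε` on `‖x‖ = R'`, this gives `|u| ≤ ε` for every `ε > 0`.
-/

open Set Filter Topology InnerProductSpace Laplacian Module Metric

theorem IsLocalMax.deriv_deriv_nonpos {f : ℝ → ℝ} {a : ℝ} (hmax : IsLocalMax f a)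
    (hf : ContinuousAt f a) : deriv (deriv f) a ≤ 0 := by
  by_contra! hpos
  have hmin : IsLocalMin f a := isLocalMin_of_deriv_deriv_pos hpos hmax.deriv_eq_zero hf
  have hconst : f =ᶠ[𝓝 a] fun _ => f a := by
    filter_upwards [hmax, hmin] with x hx₁ hx₂ using le_antisymm hx₁ hx₂
  exact hpos.ne' (by simpa using hconst.deriv.deriv_eq)

theorem IsLocalMax.iteratedFDeriv_two_nonpos {E : Type*} [NormedAddCommGroup E] [NormedSpace ℝ E]
    {f : E → ℝ} {x : E} (hmax : IsLocalMax f x) (hf : ContDiffAt ℝ 2 f x) (v : E) :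
    iteratedFDeriv ℝ 2 f x ![v, v] ≤ 0 := by
  set L : ℝ → E := fun t => x + t • v
  have hL : ∀ t, HasDerivAt L v t := fun t =>
    (((hasDerivAt_id t).smul_const v).const_add x).congr_deriv (one_smul ℝ v)
  have hL0 : L 0 = x := by simp [L]
  have hL_tendsto : Tendsto L (𝓝 0) (𝓝 x) := hL0 ▸ (hL 0).continuousAt.tendsto
  have hderiv : deriv (f ∘ L) =ᶠ[𝓝 0] fun t => fderiv ℝ f (L t) v := by
    have hdiff : ∀ᶠ y in 𝓝 x, DifferentiableAt ℝ f y :=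
      (hf.eventually (by simp)).mono fun y hy => hy.differentiableAt (by simp)
    filter_upwards [hL_tendsto.eventually hdiff] with t ht
    exact (ht.hasFDerivAt.comp_hasDerivAt t (hL t)).deriv
  have hsecond : HasDerivAt (fun t => fderiv ℝ f (L t) v) (fderiv ℝ (fderiv ℝ f) x v v) 0 := by
    have hfderiv : DifferentiableAt ℝ (fderiv ℝ f) (L 0) :=
      hL0 ▸ (hf.fderiv_right (m := 1) le_rfl).differentiableAt one_ne_zero
    exact (hfderiv.hasFDerivAt.comp_hasDerivAt 0 (hL 0)).clm_apply (hasDerivAt_const 0 v)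
      |>.congr_deriv (by simp [hL0])
  have hmaxL : IsLocalMax (f ∘ L) 0 := (hL0 ▸ hmax).comp_continuous (hL 0).continuousAt
  have := hmaxL.deriv_deriv_nonpos (hL0 ▸ hf.continuousAt |>.comp (hL 0).continuousAt)
  rw [hderiv.deriv_eq, hsecond.deriv] at this
  simpa [iteratedFDeriv_two_apply] using this

theorem Filter.Tendsto.exists_forall_le_norm_abs_le {E : Type*} [NormedAddCommGroup E]
    [ProperSpace E] {f : E → ℝ} (hf : Tendsto f (cocompact E) (𝓝 0)) {ε : ℝ} (hε : 0 < ε) :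
    ∃ r, ∀ y, r ≤ ‖y‖ → |f y| ≤ ε := by
  have := hf.eventually (closedBall_mem_nhds (0 : ℝ) hε)
  rw [← cobounded_eq_cocompact, ← comap_norm_atTop, eventually_comap, eventually_atTop] at this
  obtain ⟨r, hr⟩ := this
  exact ⟨r, fun y hy => by simpa using hr ‖y‖ hy y rfl⟩

section Laplacian

variable {E : Type*} [NormedAddCommGroup E] [InnerProductSpace ℝ E] [FiniteDimensional ℝ E]

theorem IsLocalMax.laplacian_nonpos {f : E → ℝ} {x : E} (hmax : IsLocalMax f x)
    (hf : ContDiffAt ℝ 2 f x) : Δ f x ≤ 0 := by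
  rw [laplacian_eq_iteratedFDeriv_stdOrthonormalBasis]
  exact Finset.sum_nonpos fun i _ => hmax.iteratedFDeriv_two_nonpos hf _

theorem ContDiffAt.laplacian_eq_sum_fderiv_fderiv_apply {ι : Type*} [Fintype ι] {f : E → ℝ}
    {x : E} (hf : ContDiffAt ℝ 2 f x) (b : OrthonormalBasis ι ℝ E) :
    Δ f x = ∑ i, fderiv ℝ (fun y => fderiv ℝ f y (b i)) x (b i) := by
  have hfderiv : DifferentiableAt ℝ (fderiv ℝ f) x :=
    (hf.fderiv_right (m := 1) le_rfl).differentiableAt one_ne_zero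
  simp [laplacian_eq_iteratedFDeriv_orthonormalBasis f b, iteratedFDeriv_two_apply,
    fderiv_clm_apply hfderiv (differentiableAt_const _)]

theorem laplacian_norm_sq : Δ (fun x : E => ‖x‖ ^ 2) = fun _ => 2 * (finrank ℝ E : ℝ) := by
  ext x
  have hsecond (v : E) : fderiv ℝ (fderiv ℝ fun x : E => ‖x‖ ^ 2) x v v = 2 * ‖v‖ ^ 2 := by
    rw [fderiv_norm_sq, ← FunLike.coe_smul, ContinuousLinearMap.fderiv]
    simp only [smul_apply, nsmul_eq_mul, Nat.cast_ofNat, mul_eq_mul_left_iff, OfNat.ofNat_ne_zero,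
      or_false]
    exact real_inner_self_eq_norm_sq v
  simp [laplacian_eq_iteratedFDeriv_stdOrthonormalBasis, iteratedFDeriv_two_apply, hsecond,
    mul_comm]

theorem exists_mem_diff_isMaxOn_add_mul_norm_sq [Nontrivial E] {f : E → ℝ} {A U : Set E}
    (hA : IsCompact A) (hAne : A.Nonempty) (hU : IsOpen U) (hUA : U ⊆ A)
    (hfA : ContinuousOn f A) (hfU : ContDiffOn ℝ 2 f U) (hΔ : ∀ x ∈ U, 0 ≤ Δ f x)
    {δ : ℝ} (hδ : 0 < δ) :
    ∃ z ∈ A \ U, IsMaxOn (fun x => f x + δ * ‖x‖ ^ 2) A z := by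
  have hg : ContinuousOn (fun x => f x + δ * ‖x‖ ^ 2) A := hfA.add (by fun_prop)
  obtain ⟨z, hzA, hzmax⟩ := hA.exists_isMaxOn hAne hg
  refine ⟨z, ⟨hzA, fun hzU => ?_⟩, hzmax⟩
  have hfz : ContDiffAt ℝ 2 f z := hfU.contDiffAt (hU.mem_nhds hzU)
  have hnorm : ContDiffAt ℝ 2 (fun x : E => ‖x‖ ^ 2) z := (contDiff_norm_sq ℝ).contDiffAt
  have hΔg : Δ (fun x => f x + δ * ‖x‖ ^ 2) z = Δ f z + δ * (2 * finrank ℝ E) := by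
    change Δ (f + δ • fun x : E => ‖x‖ ^ 2) z = _
    have hδnorm : ContDiffAt ℝ 2 (δ • fun x : E => ‖x‖ ^ 2) z := hnorm.const_smul δ
    rw [hfz.laplacian_add hδnorm, laplacian_smul δ hnorm, laplacian_norm_sq,
      smul_eq_mul]
  have hmax := (hzmax.isLocalMax (mem_of_superset (hU.mem_nhds hzU) hUA)).laplacian_nonpos
    (hfz.add (contDiffAt_const.mul hnorm))
  have hpert : 0 < δ * (2 * finrank ℝ E : ℝ) := by
    have : 0 < finrank ℝ E := finrank_pos
    positivity
  linarith [hΔ z hzU, hΔg ▸ hmax]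

theorem le_of_forall_mem_diff_le_of_laplacian_nonneg [Nontrivial E] {f : E → ℝ} {A U : Set E}
    (hA : IsCompact A) (hU : IsOpen U) (hUA : U ⊆ A)
    (hfA : ContinuousOn f A) (hfU : ContDiffOn ℝ 2 f U) (hΔ : ∀ x ∈ U, 0 ≤ Δ f x)
    {M : ℝ} (hM : ∀ x ∈ A \ U, f x ≤ M) {x : E} (hx : x ∈ A) : f x ≤ M := by
  obtain ⟨C, hC⟩ := hA.isBounded.exists_norm_le
  have hlim : Tendsto (fun δ : ℝ => M + δ * C ^ 2) (𝓝[>] 0) (𝓝 M) := by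
    have : Continuous fun δ : ℝ => M + δ * C ^ 2 := by fun_prop
    simpa using (this.tendsto 0).mono_left nhdsWithin_le_nhds
  refine ge_of_tendsto hlim (eventually_nhdsWithin_of_forall fun δ (hδ : 0 < δ) => ?_)
  obtain ⟨z, hz, hzmax⟩ :=
    exists_mem_diff_isMaxOn_add_mul_norm_sq hA ⟨x, hx⟩ hU hUA hfA hfU hΔ hδ
  have hz_norm : ‖z‖ ^ 2 ≤ C ^ 2 := pow_le_pow_left₀ (norm_nonneg z) (hC z hz.1) 2
  calc f x ≤ f x + δ * ‖x‖ ^ 2 := le_add_of_nonneg_right (by positivity)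
    _ ≤ f z + δ * ‖z‖ ^ 2 := hzmax hx
    _ ≤ M + δ * C ^ 2 := add_le_add (hM z hz) (mul_le_mul_of_nonneg_left hz_norm hδ.le)

theorem abs_le_of_forall_mem_diff_abs_le_of_laplacian_eq_zero [Nontrivial E] {f : E → ℝ}
    {A U : Set E} (hA : IsCompact A) (hU : IsOpen U) (hUA : U ⊆ A)
    (hfA : ContinuousOn f A) (hfU : ContDiffOn ℝ 2 f U) (hΔ : ∀ x ∈ U, Δ f x = 0)
    {M : ℝ} (hM : ∀ x ∈ A \ U, |f x| ≤ M) {x : E} (hx : x ∈ A) : |f x| ≤ M := by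
  refine abs_le.2 ⟨?_, ?_⟩
  · refine neg_le.1 (le_of_forall_mem_diff_le_of_laplacian_nonneg (f := -f) hA hU hUA hfA.neg
      hfU.neg (fun y hy => by simp [laplacian_neg, hΔ y hy])
      (fun y hy => neg_le.2 (abs_le.1 (hM y hy)).1) hx)
  · exact le_of_forall_mem_diff_le_of_laplacian_nonneg hA hU hUA hfA hfU
      (fun y hy => (hΔ y hy).ge) (fun y hy => le_of_abs_le (hM y hy)) hx

end Laplacian

theorem exterior_dirichlet_uniqueness_general
    (R : ℝ)
    (u : EuclideanSpace ℝ (Fin 2) → ℝ)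
    (hcont : ContinuousOn u {x | R ≤ ‖x‖})
    (hC2 : ContDiffOn ℝ 2 u {x | R < ‖x‖})
    (hharm : ∀ x : EuclideanSpace ℝ (Fin 2), R < ‖x‖ →
      (∑ i : Fin 2, fderiv ℝ (fun y => fderiv ℝ u y (EuclideanSpace.single i 1)) x
        (EuclideanSpace.single i 1)) = 0)
    (hbdry : ∀ x : EuclideanSpace ℝ (Fin 2), ‖x‖ = R → u x = 0)
    (hdecay : Filter.Tendsto u (Filter.cocompact (EuclideanSpace ℝ (Fin 2))) (nhds 0)) :
    ∀ x : EuclideanSpace ℝ (Fin 2), R ≤ ‖x‖ → u x = 0 := by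
  intro x hx
  have hΔ : ∀ y, R < ‖y‖ → Δ u y = 0 := fun y hy => by
    rw [(hC2.contDiffAt (isOpen_lt continuous_const continuous_norm |>.mem_nhds hy))
      |>.laplacian_eq_sum_fderiv_fderiv_apply (EuclideanSpace.basisFun (Fin 2) ℝ)]
    simpa using hharm y hy
  refine abs_nonpos_iff.1 (le_of_forall_pos_le_add fun ε hε => ?_)
  obtain ⟨r, hr⟩ := hdecay.exists_forall_le_norm_abs_le hε
  set R' := max r ‖x‖
  have hbdry_annulus : ∀ y ∈ (closedBall 0 R' \ ball 0 R) \ (ball 0 R' \ closedBall 0 R),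
      |u y| ≤ ε := by
    rintro y ⟨⟨hyR', hyR⟩, hyU⟩
    simp only [mem_closedBall, mem_ball, dist_zero_right, not_lt, Set.mem_sdiff, not_and, not_le]
      at hyR' hyR hyU
    rcases hyR'.lt_or_eq with hy | hy
    · simp [hbdry y (le_antisymm (hyU hy) hyR), hε.le]
    · exact hr y (hy ▸ le_max_left _ _)
  simpa using abs_le_of_forall_mem_diff_abs_le_of_laplacian_eq_zero
    (isCompact_closedBall _ _ |>.diff isOpen_ball) (isOpen_ball.sdiff isClosed_closedBall)
    (sdiff_subset_sdiff ball_subset_closedBall ball_subset_closedBall)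
    (hcont.mono fun y hy => by simpa using hy.2) (hC2.mono fun y hy => by simpa using hy.2)
    (fun y hy => hΔ y (by simpa using hy.2)) hbdry_annulus
    (x := x) (by simpa [R'] using hx)

/-- Uniqueness for the exterior Dirichlet problem in the plane: a function harmonic
outside the disc of radius `R`, continuous up to the boundary circle, vanishing on the
circle and tending to `0` at infinity, vanishes identically on the exterior region. -/
theorem exterior_dirichlet_uniqueness
    (R : ℝ) (hR : 0 < R)
    (u : EuclideanSpace ℝ (Fin 2) → ℝ)
    (hcont : ContinuousOn u {x | R ≤ ‖x‖})
    (hC2 : ContDiffOn ℝ 2 u {x | R < ‖x‖})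
    (hharm : ∀ x : EuclideanSpace ℝ (Fin 2), R < ‖x‖ →
      (∑ i : Fin 2, fderiv ℝ (fun y => fderiv ℝ u y (EuclideanSpace.single i 1)) x
        (EuclideanSpace.single i 1)) = 0)
    (hbdry : ∀ x : EuclideanSpace ℝ (Fin 2), ‖x‖ = R → u x = 0)
    (hdecay : Filter.Tendsto u (Filter.cocompact (EuclideanSpace ℝ (Fin 2))) (nhds 0)) :
    ∀ x : EuclideanSpace ℝ (Fin 2), R ≤ ‖x‖ → u x = 0 :=
  exterior_dirichlet_uniqueness_general R u hcont hC2 hharm hbdry hdecay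
end
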